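/- arXiv:2602.01557 — 2 statements merged into one kernel-verified Lean document; each statement's English description precedes it below -/
import Mathlib

section
/- Let ω be a unit vector in ℝ³ and θ ∈ (0, π/2). If x, y ∈ Ω_{ω,θ} and |y| ≥ |x| / cos θ, then ⟨x − y, ω⟩ ≤ (|x|/cos θ − |y|)·cos θ ≤ 0; in particular, if moreover x ≠ y, then x − y ∉ Ω_{ω,θ}. -/
noncomputable section

open Real
open scoped RealInnerProductSpace

/-- The cone `Ω_{ω,θ}` with vertex at the origin, axis `ω`, and opening angle `θ`:
all `x` whose angle with `ω` is at most `θ`, i.e. `⟨x, ω⟩ ≥ ‖x‖ cos θ`. -/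
def Cone (ω : EuclideanSpace ℝ (Fin 3)) (θ : ℝ) : Set (EuclideanSpace ℝ (Fin 3)) :=
  {x | ‖x‖ * Real.cos θ ≤ ⟪x, ω⟫}

theorem inner_sub_le_norm_sub_mul {E : Type*} [NormedAddCommGroup E] [InnerProductSpace ℝ E]
    {ω x y : E} (hω : ‖ω‖ = 1) {c : ℝ} (hy : ‖y‖ * c ≤ ⟪y, ω⟫) :
    ⟪x - y, ω⟫ ≤ ‖x‖ - ‖y‖ * c := by
  have hx : ⟪x, ω⟫ ≤ ‖x‖ := by
    simpa [hω] using real_inner_le_norm x ω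
  rw [inner_sub_left]
  linarith

theorem cos_pos_of_mem_Ioo_zero_pi_div_two {θ : ℝ} (hθ : θ ∈ Set.Ioo 0 (π / 2)) :
    0 < Real.cos θ :=
  Real.cos_pos_of_mem_Ioo ⟨by linarith [Real.pi_pos, hθ.1], hθ.2⟩

theorem notMem_cone_of_inner_nonpos {ω v : EuclideanSpace ℝ (Fin 3)} {θ : ℝ}
    (hv : v ≠ 0) (hcos : 0 < Real.cos θ) (hvω : ⟪v, ω⟫ ≤ 0) : v ∉ Cone ω θ := fun hmem =>
  (mul_pos (norm_pos_iff.2 hv) hcos).not_ge (le_trans hmem hvω)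

theorem stmt_1_general (ω : EuclideanSpace ℝ (Fin 3)) (hω : ‖ω‖ = 1) (θ : ℝ)
    (hθ : θ ∈ Set.Ioo 0 (Real.pi / 2))
    (x y : EuclideanSpace ℝ (Fin 3)) (hy : y ∈ Cone ω θ)
    (hxy : ‖y‖ ≥ ‖x‖ / Real.cos θ) :
    ⟪x - y, ω⟫ ≤ (‖x‖ / Real.cos θ - ‖y‖) * Real.cos θ ∧
      (‖x‖ / Real.cos θ - ‖y‖) * Real.cos θ ≤ 0 ∧
      (x ≠ y → x - y ∉ Cone ω θ) := by
  have hcos := cos_pos_of_mem_Ioo_zero_pi_div_two hθ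
  have hbound : (‖x‖ / Real.cos θ - ‖y‖) * Real.cos θ = ‖x‖ - ‖y‖ * Real.cos θ := by
    rw [sub_mul, div_mul_cancel₀ _ hcos.ne']
  have hinner : ⟪x - y, ω⟫ ≤ (‖x‖ / Real.cos θ - ‖y‖) * Real.cos θ :=
    hbound ▸ inner_sub_le_norm_sub_mul hω hy
  have hnonpos : (‖x‖ / Real.cos θ - ‖y‖) * Real.cos θ ≤ 0 :=
    mul_nonpos_of_nonpos_of_nonneg (sub_nonpos.2 hxy) hcos.le
  exact ⟨hinner, hnonpos, fun hne =>
    notMem_cone_of_inner_nonpos (sub_ne_zero.2 hne) hcos (hinner.trans hnonpos)⟩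

theorem stmt_1 (ω : EuclideanSpace ℝ (Fin 3)) (hω : ‖ω‖ = 1) (θ : ℝ)
    (hθ : θ ∈ Set.Ioo 0 (Real.pi / 2))
    (x y : EuclideanSpace ℝ (Fin 3)) (hx : x ∈ Cone ω θ) (hy : y ∈ Cone ω θ)
    (hxy : ‖y‖ ≥ ‖x‖ / Real.cos θ) :
    ⟪x - y, ω⟫ ≤ (‖x‖ / Real.cos θ - ‖y‖) * Real.cos θ ∧
      (‖x‖ / Real.cos θ - ‖y‖) * Real.cos θ ≤ 0 ∧
      (x ≠ y → x - y ∉ Cone ω θ) :=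
  stmt_1_general ω hω θ hθ x y hy hxy
end
end

section
/- Let ω = (0,0,1), θ ∈ (π/3, π/2), and α ∈ (π − 2θ, θ) (this interval is nonempty since θ > π/3). Set x := (0,0,1) and, for r > 0, y_r := (r sin α, 0, r cos α). Then x ∈ Ω_{ω,θ} and y_r ∈ Ω_{ω,θ} for every r > 0, and there exists ε > 0 such that for every r ∈ (1, 1+ε] one has |y_r| > |x| and x − y_r ∈ Ω_{ω,θ}. In particular, the condition |y| > |x| alone does not imply x − y ∉ Ω_{ω,θ}. -/
noncomputable section

open Real
open scoped RealInnerProductSpace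

/-- The vector `(0,0,1)` in `ℝ³`. -/
def e3 : EuclideanSpace ℝ (Fin 3) := (WithLp.equiv 2 (Fin 3 → ℝ)).symm ![0, 0, 1]

/-- The point `y_r = (r sin α, 0, r cos α)` in `ℝ³`. -/
def yPt (r α : ℝ) : EuclideanSpace ℝ (Fin 3) :=
  (WithLp.equiv 2 (Fin 3 → ℝ)).symm ![r * Real.sin α, 0, r * Real.cos α]

/-! The cone condition is strict at the chord `e3 - y₁`, where it reads `cos θ < sin (α / 2)`.
Strict cone inequalities are open, so `e3 - y_r` stays in the cone for `r` slightly larger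
than `1`, while already `‖y_r‖ = r > 1 = ‖e3‖`. -/

section Cone

variable {ω x : EuclideanSpace ℝ (Fin 3)} {θ : ℝ}

lemma mem_Cone : x ∈ Cone ω θ ↔ ‖x‖ * cos θ ≤ ⟪x, ω⟫ := Iff.rfl

lemma mem_Cone_self (hω : ‖ω‖ = 1) : ω ∈ Cone ω θ := by
  simpa [mem_Cone, real_inner_self_eq_norm_sq, hω] using cos_le_one θ

lemma smul_mem_Cone {c : ℝ} (hc : 0 ≤ c) (hx : x ∈ Cone ω θ) : c • x ∈ Cone ω θ := by
  rw [mem_Cone, norm_smul, Real.norm_of_nonneg hc, real_inner_smul_left, mul_assoc]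
  exact mul_le_mul_of_nonneg_left hx hc

lemma ContinuousAt.eventually_mem_Cone {f : ℝ → EuclideanSpace ℝ (Fin 3)} {a : ℝ}
    (hf : ContinuousAt f a) (ha : ‖f a‖ * cos θ < ⟪f a, ω⟫) :
    ∀ᶠ r in nhds a, f r ∈ Cone ω θ :=
  ((hf.norm.mul continuousAt_const).eventually_lt (hf.inner continuousAt_const) ha).mono
    fun _ h => h.le

end Cone

lemma norm_e3 : ‖e3‖ = 1 := by
  simp [e3, EuclideanSpace.norm_eq, Fin.sum_univ_three]

lemma yPt_eq_smul (r α : ℝ) : yPt r α = r • yPt 1 α := by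
  ext i; fin_cases i <;> simp [yPt]

lemma norm_yPt_one (α : ℝ) : ‖yPt 1 α‖ = 1 := by
  simp [yPt, EuclideanSpace.norm_eq, Fin.sum_univ_three]

lemma norm_yPt (r α : ℝ) : ‖yPt r α‖ = |r| := by
  rw [yPt_eq_smul, norm_smul, norm_yPt_one, mul_one, Real.norm_eq_abs]

lemma inner_yPt_e3 (r α : ℝ) : ⟪yPt r α, e3⟫ = r * cos α := by
  simp [yPt, e3, PiLp.inner_apply, Fin.sum_univ_three]

lemma one_sub_cos_eq_two_mul_sin_half_sq (α : ℝ) : 1 - cos α = 2 * sin (α / 2) ^ 2 := by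
  calc 1 - cos α = 1 - cos (2 * (α / 2)) := by rw [mul_div_cancel₀ α two_ne_zero]
    _ = 2 * sin (α / 2) ^ 2 := by rw [cos_two_mul, cos_sq']; ring

lemma inner_e3_sub_yPt_one (α : ℝ) : ⟪e3 - yPt 1 α, e3⟫ = 2 * sin (α / 2) ^ 2 := by
  rw [inner_sub_left, real_inner_self_eq_norm_sq, norm_e3, inner_yPt_e3,
    ← one_sub_cos_eq_two_mul_sin_half_sq]
  ring

lemma norm_e3_sub_yPt_one (α : ℝ) : ‖e3 - yPt 1 α‖ = 2 * |sin (α / 2)| := by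
  refine (sq_eq_sq₀ (norm_nonneg _) (by positivity)).1 ?_
  rw [norm_sub_sq_real, real_inner_comm, inner_yPt_e3, norm_e3, norm_yPt_one, mul_pow, sq_abs]
  linarith [one_sub_cos_eq_two_mul_sin_half_sq α]

lemma continuous_yPt (α : ℝ) : Continuous fun r => yPt r α :=
  (continuous_id.smul continuous_const).congr fun r => (yPt_eq_smul r α).symm

lemma yPt_mem_Cone_e3 {r α θ : ℝ} (hr : 0 ≤ r) (hαθ : cos θ ≤ cos α) : yPt r α ∈ Cone e3 θ := by
  rw [yPt_eq_smul]
  refine smul_mem_Cone hr ?_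
  simpa [mem_Cone, norm_yPt_one, inner_yPt_e3] using hαθ

lemma eventually_e3_sub_yPt_mem_Cone {α θ : ℝ} (hθ : 0 < cos θ) (hαθ : cos θ < sin (α / 2)) :
    ∀ᶠ r in nhds 1, e3 - yPt r α ∈ Cone e3 θ := by
  have hcont : ContinuousAt (fun r => e3 - yPt r α) 1 :=
    (continuous_const.sub (continuous_yPt α)).continuousAt
  refine hcont.eventually_mem_Cone ?_
  rw [norm_e3_sub_yPt_one, inner_e3_sub_yPt_one, abs_of_pos (hθ.trans hαθ)]
  nlinarith

theorem stmt_2 (θ α : ℝ) (hθ : θ ∈ Set.Ioo (Real.pi / 3) (Real.pi / 2))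
    (hα : α ∈ Set.Ioo (Real.pi - 2 * θ) θ) :
    e3 ∈ Cone e3 θ ∧
    (∀ r : ℝ, 0 < r → yPt r α ∈ Cone e3 θ) ∧
    ∃ ε > 0, ∀ r ∈ Set.Ioc (1 : ℝ) (1 + ε),
      ‖yPt r α‖ > ‖e3‖ ∧ e3 - yPt r α ∈ Cone e3 θ := by
  obtain ⟨hθ_gt, hθ_lt⟩ := hθ
  obtain ⟨hα_gt, hα_lt⟩ := hα
  have hcos_θ_pos : 0 < cos θ := cos_pos_of_mem_Ioo ⟨by linarith [pi_pos], hθ_lt⟩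
  have hcos_lt : cos θ < cos α :=
    cos_lt_cos_of_nonneg_of_le_pi (by linarith) (by linarith) hα_lt
  have hcos_lt_sin : cos θ < sin (α / 2) := by
    rw [← sin_pi_div_two_sub]
    exact sin_lt_sin_of_lt_of_le_pi_div_two (by linarith) (by linarith) (by linarith)
  have hnear : ∀ᶠ r in nhdsWithin 1 (Set.Ioi 1), ‖yPt r α‖ > ‖e3‖ ∧ e3 - yPt r α ∈ Cone e3 θ :=
    (Filter.eventually_of_mem self_mem_nhdsWithin fun r (hr : 1 < r) => by
        rwa [norm_yPt, norm_e3, abs_of_pos (one_pos.trans hr)]).and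
      (nhdsWithin_le_nhds (eventually_e3_sub_yPt_mem_Cone hcos_θ_pos hcos_lt_sin))
  obtain ⟨u, hu, hsub⟩ := mem_nhdsGT_iff_exists_Ioc_subset.1 hnear
  refine ⟨mem_Cone_self norm_e3, fun r hr => yPt_mem_Cone_e3 hr.le hcos_lt.le, u - 1,
    sub_pos.2 hu, fun r hr => hsub ?_⟩
  rwa [add_sub_cancel] at hr
end
end
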